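/- arXiv:2504.18368 — 3 statements merged into one kernel-verified Lean document; each statement's English description precedes it below -/
import Mathlib

section
/- In the single-period profit maximization with no export (P_EX = 0), if the LMP satisfies π ≤ π̲ := γ(π_H+τ_H−c_W) − τ_IM, then the choice P_H = Q_H, P_IM = max(Q_H − ηQ_R, 0) maximizes the objective (π_H+τ_H−c_W)·γ·P_H − (π+τ_IM)·P_IM over all feasible (P_H, P_IM) with 0 ≤ P_H − P_IM ≤ ηQ_R, 0 ≤ P_H ≤ Q_H, 0 ≤ P_IM ≤ Q_H, provided π + τ_IM ≥ 0. -/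
/-!
Write `m = (π_H + τ_H - c_W) γ` for the value of a unit of hydrogen and `c = π + τ_IM` for the
cost of a unit of import; the price condition `π ≤ π̲` says exactly `c ≤ m`. The objective
`m P_H - c P_IM` is then bounded by `m Q_H` (drop the import cost) and, rewriting it as
`(m - c) P_H + c (P_H - P_IM)`, by `m Q_H - c (Q_H - η Q_R)`. The proposed point attains the
smaller of these two bounds.
-/

section LinearObjective

variable {R : Type*} [CommRing R] [LinearOrder R] [IsStrictOrderedRing R] {m c x y X L : R}

theorem mul_sub_mul_le_mul_of_le (hm : 0 ≤ m) (hc : 0 ≤ c) (hy : 0 ≤ y) (hx : x ≤ X) :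
    m * x - c * y ≤ m * X :=
  calc m * x - c * y ≤ m * x := sub_le_self _ (mul_nonneg hc hy)
    _ ≤ m * X := mul_le_mul_of_nonneg_left hx hm

theorem mul_sub_mul_le_mul_sub_mul_of_sub_le (hc : 0 ≤ c) (hcm : c ≤ m) (hx : x ≤ X)
    (hxy : x - y ≤ L) : m * x - c * y ≤ m * X - c * (X - L) :=
  calc m * x - c * y = (m - c) * x + c * (x - y) := by ring
    _ ≤ (m - c) * X + c * L := by gcongr
    _ = m * X - c * (X - L) := by ring

theorem mul_sub_mul_le_mul_sub_mul_max (hc : 0 ≤ c) (hcm : c ≤ m) (hx : x ≤ X) (hy : 0 ≤ y)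
    (hxy : x - y ≤ L) : m * x - c * y ≤ m * X - c * max (X - L) 0 := by
  rw [le_sub_comm, mul_max_of_nonneg _ _ hc, mul_zero]
  refine max_le ?_ ?_
  · linarith [mul_sub_mul_le_mul_sub_mul_of_sub_le hc hcm hx hxy]
  · linarith [mul_sub_mul_le_mul_of_le (hc.trans hcm) hc hy hx]

end LinearObjective

theorem no_export_low_price_optimal_general
    (QR QH η π πH τH cW τIM γ : ℝ)
    (hcost : 0 ≤ π + τIM)
    (hπ : π ≤ γ * (πH + τH - cW) - τIM) :
    ∀ PH PIM : ℝ,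
      0 ≤ PH → PH ≤ QH → 0 ≤ PIM → PIM ≤ QH →
      0 ≤ PH - PIM → PH - PIM ≤ η * QR →
      (πH + τH - cW) * γ * PH - (π + τIM) * PIM ≤
        (πH + τH - cW) * γ * QH - (π + τIM) * (max (QH - η * QR) 0) := by
  intro PH PIM _ hPH hPIM _ _ hflow
  have hprice : π + τIM ≤ (πH + τH - cW) * γ := by linarith [mul_comm γ (πH + τH - cW)]
  exact mul_sub_mul_le_mul_sub_mul_max hcost hprice hPH hPIM hflow

theorem no_export_low_price_optimal
    (QR QH η π πH τH cW τIM γ : ℝ)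
    (hQR : 0 ≤ QR) (hQH : 0 ≤ QH) (hη0 : 0 ≤ η) (hη1 : η ≤ 1)
    (hγ : 0 < γ) (hmargin : 0 ≤ πH + τH - cW)
    (hcost : 0 ≤ π + τIM)
    (hπ : π ≤ γ * (πH + τH - cW) - τIM) :
    ∀ PH PIM : ℝ,
      0 ≤ PH → PH ≤ QH → 0 ≤ PIM → PIM ≤ QH →
      0 ≤ PH - PIM → PH - PIM ≤ η * QR →
      (πH + τH - cW) * γ * PH - (π + τIM) * PIM ≤
        (πH + τH - cW) * γ * QH - (π + τIM) * (max (QH - η * QR) 0) :=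
  no_export_low_price_optimal_general QR QH η π πH τH cW τIM γ hcost hπ
end

section
/- In the net-zero region: if −τ_IM < π, Q_H ≤ ηQ_R, and π ≤ −τ_EX, then the no-export optimum and the no-import optimum coincide at P_H = Q_H with P_IM = P_EX = 0, and both achieve the same objective value γ(π_H+τ_H−c_W)Q_H; in particular the optimal prosumer production equals Q_H with zero grid exchange. -/
/-! In the net-zero price window −τ_IM < π ≤ −τ_EX, importing costs π + τ_IM > 0 per unit and
exporting earns π + τ_EX ≤ 0, so any grid exchange can only lower either objective, while the
hydrogen term is nondecreasing in P_H. Both optima therefore sit at P_H = Q_H with no exchange. -/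

theorem mul_add_mul_le_mul_of_nonpos {α : Type*} [Ring α] [PartialOrder α] [IsOrderedRing α]
    {a c x X y : α} (ha : 0 ≤ a) (hc : c ≤ 0) (hx : x ≤ X) (hy : 0 ≤ y) :
    a * x + c * y ≤ a * X :=
  add_le_of_le_of_nonpos (mul_le_mul_of_nonneg_left hx ha) (mul_nonpos_of_nonpos_of_nonneg hc hy)

theorem mul_sub_mul_le_mul_of_nonneg {α : Type*} [Ring α] [PartialOrder α] [IsOrderedRing α]
    {a b x X y : α} (ha : 0 ≤ a) (hb : 0 ≤ b) (hx : x ≤ X) (hy : 0 ≤ y) :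
    a * x - b * y ≤ a * X := by
  simpa only [sub_eq_add_neg, neg_mul] using
    mul_add_mul_le_mul_of_nonpos ha (neg_nonpos.mpr hb) hx hy

theorem net_zero_region_optimal_general
    (QR QH η π πH τH cW τIM τEX γ : ℝ)
    (hγ : 0 < γ) (hmargin : 0 ≤ πH + τH - cW)
    (hπlo : -τIM < π) (hπhi : π ≤ -τEX) :
    (∀ PH PIM : ℝ,
      0 ≤ PH → PH ≤ QH → 0 ≤ PIM → PIM ≤ QH →
      0 ≤ PH - PIM → PH - PIM ≤ η * QR →
      γ * (πH + τH - cW) * PH - (π + τIM) * PIM ≤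
        γ * (πH + τH - cW) * QH) ∧
    (∀ PH PEX : ℝ,
      0 ≤ PH → PH ≤ QH → 0 ≤ PEX → PEX ≤ η * QR →
      PH + PEX ≤ η * QR →
      γ * (πH + τH - cW) * PH + (π + τEX) * PEX ≤
        γ * (πH + τH - cW) * QH) ∧
    γ * (πH + τH - cW) * QH - (π + τIM) * 0 = γ * (πH + τH - cW) * QH ∧
    γ * (πH + τH - cW) * QH + (π + τEX) * 0 = γ * (πH + τH - cW) * QH := by
  have hgain : 0 ≤ γ * (πH + τH - cW) := mul_nonneg hγ.le hmargin
  have himport : 0 ≤ π + τIM := by linarith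
  have hexport : π + τEX ≤ 0 := by linarith
  refine ⟨?_, ?_, by rw [mul_zero, sub_zero], by rw [mul_zero, add_zero]⟩
  · intro PH PIM _ hPH hPIM _ _ _
    exact mul_sub_mul_le_mul_of_nonneg hgain himport hPH hPIM
  · intro PH PEX _ hPH hPEX _ _
    exact mul_add_mul_le_mul_of_nonpos hgain hexport hPH hPEX

theorem net_zero_region_optimal
    (QR QH η π πH τH cW τIM τEX γ : ℝ)
    (hQR : 0 ≤ QR) (hQH : 0 ≤ QH) (hη0 : 0 ≤ η) (hη1 : η ≤ 1)
    (hγ : 0 < γ) (hmargin : 0 ≤ πH + τH - cW)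
    (hREC : τIM > τEX) (hEX : 0 ≤ τEX)
    (hπlo : -τIM < π) (hπhi : π ≤ -τEX)
    (hcap : QH ≤ η * QR) :
    (∀ PH PIM : ℝ,
      0 ≤ PH → PH ≤ QH → 0 ≤ PIM → PIM ≤ QH →
      0 ≤ PH - PIM → PH - PIM ≤ η * QR →
      γ * (πH + τH - cW) * PH - (π + τIM) * PIM ≤
        γ * (πH + τH - cW) * QH) ∧
    (∀ PH PEX : ℝ,
      0 ≤ PH → PH ≤ QH → 0 ≤ PEX → PEX ≤ η * QR →
      PH + PEX ≤ η * QR →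
      γ * (πH + τH - cW) * PH + (π + τEX) * PEX ≤
        γ * (πH + τH - cW) * QH) ∧
    γ * (πH + τH - cW) * QH - (π + τIM) * 0 = γ * (πH + τH - cW) * QH ∧
    γ * (πH + τH - cW) * QH + (π + τEX) * 0 = γ * (πH + τH - cW) * QH :=
  net_zero_region_optimal_general QR QH η π πH τH cW τIM τEX γ hγ hmargin hπlo hπhi
end

section
/- The one-sided difference satisfies: for 0 ≤ κ₁ ≤ κ₂, g(κ₂) − g(κ₁) = ∫∫_{κ₁<η≤κ₂} [(π̲ − π)1{0≤π≤π̲} − (π̄ − π)1{0≤π≤π̄}] dρ ≤ −∫∫_{κ₁<η≤κ₂, 0≤π≤π̲} (π̄ − π̲) dρ − ∫∫_{κ₁<η≤κ₂, π̲<π≤π̄} (π̄ − π) dρ ≤ 0, where both integrands are nonnegative; hence the marginal value of electrolyzer capacity decreases by at least the mass-weighted REC price gap. -/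
open MeasureTheory

/-!
Write `η` for the second coordinate. The integrand of `g κ` switches, as `κ` passes `η`, from the
upper payoff `(π̄ - π) 1{0 ≤ π ≤ π̄}` to the lower one `(π̲ - π) 1{0 ≤ π ≤ π̲}`, so `g κ₂ - g κ₁` is the
integral of their difference over the window `κ₁ < η ≤ κ₂`. Pointwise that difference equals
`-(π̄ - π̲) 1{0 ≤ π ≤ π̲} - (π̄ - π) 1{π̲ < π ≤ π̄}`, a sum of two nonpositive terms.
-/

theorem integrable_ite_of_abs_le {α : Type*} [MeasurableSpace α] {μ : Measure α}
    [IsFiniteMeasure μ] {P : α → Prop} [DecidablePred P] {f : α → ℝ} {C : ℝ}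
    (hP : MeasurableSet {x | P x}) (hf : Measurable f) (hC : ∀ x, P x → |f x| ≤ C) :
    Integrable (fun x => if P x then f x else 0) μ := by
  refine .of_bound (hf.ite hP measurable_const).aestronglyMeasurable (max C 0)
    (ae_of_all _ fun x => ?_)
  split_ifs with h
  · exact (hC x h).trans (le_max_left C 0)
  · simp

theorem payoff_sub_payoff_eq_window {πl πu κ₁ κ₂ : ℝ} (hκ : κ₁ ≤ κ₂) (π η : ℝ) :
    ((if 0 ≤ π ∧ π ≤ πl ∧ η ≤ κ₂ then πl - π else 0) +
        (if 0 ≤ π ∧ π ≤ πu ∧ κ₂ < η then πu - π else 0)) -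
      ((if 0 ≤ π ∧ π ≤ πl ∧ η ≤ κ₁ then πl - π else 0) +
        (if 0 ≤ π ∧ π ≤ πu ∧ κ₁ < η then πu - π else 0)) =
      if κ₁ < η ∧ η ≤ κ₂ then
        (if 0 ≤ π ∧ π ≤ πl then πl - π else 0) - (if 0 ≤ π ∧ π ≤ πu then πu - π else 0)
      else 0 := by
  split_ifs <;> grind

theorem lower_payoff_sub_upper_payoff_eq {πl πu : ℝ} (hl : 0 ≤ πl) (hlu : πl ≤ πu) (π : ℝ) :
    (if 0 ≤ π ∧ π ≤ πl then πl - π else 0) - (if 0 ≤ π ∧ π ≤ πu then πu - π else 0) =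
      -(if 0 ≤ π ∧ π ≤ πl then πu - πl else 0) - (if πl < π ∧ π ≤ πu then πu - π else 0) := by
  split_ifs <;> grind

section

variable (ρ : Measure (ℝ × ℝ)) [IsFiniteMeasure ρ] {πl πu κ₁ κ₂ : ℝ}

theorem integral_payoff_sub_eq_integral_window (hκ : κ₁ ≤ κ₂) :
    ((∫ p, (if 0 ≤ p.1 ∧ p.1 ≤ πl ∧ p.2 ≤ κ₂ then πl - p.1 else 0) ∂ρ) +
        (∫ p, (if 0 ≤ p.1 ∧ p.1 ≤ πu ∧ κ₂ < p.2 then πu - p.1 else 0) ∂ρ)) -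
      ((∫ p, (if 0 ≤ p.1 ∧ p.1 ≤ πl ∧ p.2 ≤ κ₁ then πl - p.1 else 0) ∂ρ) +
        (∫ p, (if 0 ≤ p.1 ∧ p.1 ≤ πu ∧ κ₁ < p.2 then πu - p.1 else 0) ∂ρ)) =
      ∫ p, (if κ₁ < p.2 ∧ p.2 ≤ κ₂ then
        (if 0 ≤ p.1 ∧ p.1 ≤ πl then πl - p.1 else 0)
          - (if 0 ≤ p.1 ∧ p.1 ≤ πu then πu - p.1 else 0) else 0) ∂ρ := by
  have hLower (c κ : ℝ) : Integrable
      (fun p : ℝ × ℝ => if 0 ≤ p.1 ∧ p.1 ≤ c ∧ p.2 ≤ κ then c - p.1 else 0) ρ :=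
    integrable_ite_of_abs_le (C := c) (by measurability) (by fun_prop)
      fun _ ⟨h0, h1, _⟩ => abs_le.2 ⟨by linarith, by linarith⟩
  have hUpper (c κ : ℝ) : Integrable
      (fun p : ℝ × ℝ => if 0 ≤ p.1 ∧ p.1 ≤ c ∧ κ < p.2 then c - p.1 else 0) ρ :=
    integrable_ite_of_abs_le (C := c) (by measurability) (by fun_prop)
      fun _ ⟨h0, h1, _⟩ => abs_le.2 ⟨by linarith, by linarith⟩
  rw [← integral_add (hLower πl κ₂) (hUpper πu κ₂), ← integral_add (hLower πl κ₁) (hUpper πu κ₁),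
    ← integral_sub]
  · exact integral_congr_ae (ae_of_all _ fun p => payoff_sub_payoff_eq_window hκ p.1 p.2)
  all_goals exact (hLower _ _).add (hUpper _ _)

theorem integral_window_eq_neg_sub (hl : 0 ≤ πl) (hlu : πl ≤ πu) :
    ∫ p, (if κ₁ < p.2 ∧ p.2 ≤ κ₂ then
        (if 0 ≤ p.1 ∧ p.1 ≤ πl then πl - p.1 else 0)
          - (if 0 ≤ p.1 ∧ p.1 ≤ πu then πu - p.1 else 0) else 0) ∂ρ =
      -(∫ p, (if κ₁ < p.2 ∧ p.2 ≤ κ₂ ∧ 0 ≤ p.1 ∧ p.1 ≤ πl then πu - πl else 0) ∂ρ)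
        - (∫ p, (if κ₁ < p.2 ∧ p.2 ≤ κ₂ ∧ πl < p.1 ∧ p.1 ≤ πu then πu - p.1 else 0) ∂ρ) := by
  have hGap : Integrable
      (fun p : ℝ × ℝ => if κ₁ < p.2 ∧ p.2 ≤ κ₂ ∧ 0 ≤ p.1 ∧ p.1 ≤ πl then πu - πl else 0) ρ :=
    integrable_ite_of_abs_le (C := πu - πl) (by measurability) measurable_const
      fun _ _ => (abs_of_nonneg (sub_nonneg.2 hlu)).le
  have hSlope : Integrable
      (fun p : ℝ × ℝ => if κ₁ < p.2 ∧ p.2 ≤ κ₂ ∧ πl < p.1 ∧ p.1 ≤ πu then πu - p.1 else 0) ρ :=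
    integrable_ite_of_abs_le (C := πu) (by measurability) (by fun_prop)
      fun _ ⟨_, _, h0, h1⟩ => abs_le.2 ⟨by linarith, by linarith⟩
  rw [← integral_neg, ← integral_sub ?_ hSlope]
  · refine integral_congr_ae (ae_of_all _ fun p => ?_)
    by_cases hw : κ₁ < p.2 ∧ p.2 ≤ κ₂
    · simpa [hw] using lower_payoff_sub_upper_payoff_eq hl hlu p.1
    · have hw' (Q : Prop) : ¬(κ₁ < p.2 ∧ p.2 ≤ κ₂ ∧ Q) := fun h => hw ⟨h.1, h.2.1⟩
      simp [hw, hw']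
  · exact hGap.neg

end

theorem marginal_value_difference
    (ρ : Measure (ℝ × ℝ)) [IsFiniteMeasure ρ]
    (πl πu : ℝ) (hl : 0 < πl) (hlu : πl < πu)
    (g : ℝ → ℝ)
    (hg : ∀ κ : ℝ, g κ =
      (∫ p, (if 0 ≤ p.1 ∧ p.1 ≤ πl ∧ p.2 ≤ κ then πl - p.1 else 0) ∂ρ) +
      (∫ p, (if 0 ≤ p.1 ∧ p.1 ≤ πu ∧ κ < p.2 then πu - p.1 else 0) ∂ρ)) :
    ∀ κ₁ κ₂ : ℝ, 0 ≤ κ₁ → κ₁ ≤ κ₂ →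
      (g κ₂ - g κ₁ =
        ∫ p, (if κ₁ < p.2 ∧ p.2 ≤ κ₂ then
          (if 0 ≤ p.1 ∧ p.1 ≤ πl then πl - p.1 else 0)
            - (if 0 ≤ p.1 ∧ p.1 ≤ πu then πu - p.1 else 0) else 0) ∂ρ) ∧
      (g κ₂ - g κ₁ ≤
        -(∫ p, (if κ₁ < p.2 ∧ p.2 ≤ κ₂ ∧ 0 ≤ p.1 ∧ p.1 ≤ πl
            then πu - πl else 0) ∂ρ)
        - (∫ p, (if κ₁ < p.2 ∧ p.2 ≤ κ₂ ∧ πl < p.1 ∧ p.1 ≤ πu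
            then πu - p.1 else 0) ∂ρ)) ∧
      g κ₂ - g κ₁ ≤ 0 := by
  intro κ₁ κ₂ _ hκ
  rw [hg κ₂, hg κ₁, integral_payoff_sub_eq_integral_window ρ hκ,
    integral_window_eq_neg_sub ρ hl.le hlu.le]
  have hGap_nonneg : 0 ≤ ∫ p, (if κ₁ < p.2 ∧ p.2 ≤ κ₂ ∧ 0 ≤ p.1 ∧ p.1 ≤ πl
      then πu - πl else 0) ∂ρ :=
    integral_nonneg fun _ => ite_nonneg (by linarith) le_rfl
  have hSlope_nonneg : 0 ≤ ∫ p, (if κ₁ < p.2 ∧ p.2 ≤ κ₂ ∧ πl < p.1 ∧ p.1 ≤ πu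
      then πu - p.1 else 0) ∂ρ :=
    integral_nonneg fun _ => by
      simp only [Pi.zero_apply]
      split_ifs with h
      exacts [sub_nonneg.2 h.2.2.2, le_rfl]
  exact ⟨rfl, le_rfl, by linarith⟩
end
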